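/- Let p be a prime, m a positive integer, q = p^m, and let f : 𝔽_q → 𝔽_p be a p-ary function. For any two nonzero elements β, β' ∈ 𝔽_q^*, one has χ_β(D_{f,i}) = χ_{β'}(D_{f,i}) for all i ∈ 𝔽_p if and only if W_f(zβ) = W_f(zβ') for all z ∈ 𝔽_p^*. -/

import Mathlib

open Finset

noncomputable def zeta (p : ℕ) (a : ZMod p) : ℂ :=
  Complex.exp (2 * Real.pi * Complex.I / p) ^ a.val
def Dset {p : ℕ} {F : Type*} [Fintype F] (f : F → ZMod p) (i : ZMod p) : Finset F :=
  Finset.univ.filter fun x => f x = i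
noncomputable def walsh (p : ℕ) {F : Type*} [Fintype F] [CommRing F] [Algebra (ZMod p) F]
    (f : F → ZMod p) (β : F) : ℂ :=
  ∑ x : F, zeta p (f x - Algebra.trace (ZMod p) F (β * x))
noncomputable def chi (p : ℕ) {F : Type*} [CommRing F] [Algebra (ZMod p) F]
    (β : F) (D : Finset F) : ℂ :=
  ∑ α ∈ D, zeta p (Algebra.trace (ZMod p) F (β * α))

section Aux
open Polynomial

private lemma key_range (p : ℕ) [hp : Fact p.Prime] (g : ℕ → ℤ)
    (h1 : ∑ k ∈ range p, (g k : ℂ) * Complex.exp (2 * Real.pi * Complex.I / p) ^ k = 0)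
    (h2 : ∑ k ∈ range p, g k = 0) : ∀ k ∈ range p, g k = 0 := by
  set ζ := Complex.exp (2 * Real.pi * Complex.I / p) with hζdef
  have hζ : IsPrimitiveRoot ζ p := Complex.isPrimitiveRoot_exp p hp.out.ne_zero
  set Q : ℚ[X] := ∑ k ∈ range p, C (g k : ℚ) * X ^ k with hQ
  have hcoeff : ∀ k ∈ range p, Q.coeff k = (g k : ℚ) := by
    intro k hk
    rw [hQ, finset_sum_coeff]
    rw [Finset.sum_eq_single k]
    · simp
    · intro j hj hjk; simp [coeff_C_mul, coeff_X_pow, hjk, Ne.symm hjk]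
    · intro h; exact absurd hk h
  have haev : aeval ζ Q = 0 := by
    rw [hQ]
    simp only [map_sum, map_mul, aeval_C, map_pow, aeval_X]
    simpa using h1
  have hmin : minpoly ℚ ζ = cyclotomic p ℚ := (cyclotomic_eq_minpoly_rat hζ hp.out.pos).symm
  have hdvd : cyclotomic p ℚ ∣ Q := hmin ▸ minpoly.dvd ℚ ζ haev
  obtain ⟨R, hR⟩ := hdvd
  have hcyc0 : (cyclotomic p ℚ) ≠ 0 := cyclotomic_ne_zero p ℚ
  have hQdeg : Q.natDegree ≤ p - 1 := by
    rw [hQ]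
    refine (natDegree_sum_le _ _).trans ?_
    simp only [Finset.fold_max_le]
    constructor
    · omega
    · intro k hk
      refine (natDegree_C_mul_le _ _).trans ?_
      simp only [natDegree_X_pow]
      exact Nat.le_sub_one_of_lt (mem_range.mp hk)
  have hcycdeg : (cyclotomic p ℚ).natDegree = p - 1 := by
    rw [natDegree_cyclotomic, Nat.totient_prime hp.out]
  have hQ0 : Q = 0 := by
    by_contra hQ0
    have hR0 : R ≠ 0 := fun h => hQ0 (by rw [hR, h, mul_zero])
    have hdeg : Q.natDegree = (p - 1) + R.natDegree := by
      rw [hR, natDegree_mul hcyc0 hR0, hcycdeg]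
    have hRdeg : R.natDegree = 0 := by omega
    obtain ⟨c, hc⟩ := natDegree_eq_zero.mp hRdeg
    have hgc : ∀ k ∈ range p, (g k : ℚ) = c := by
      intro k hk
      rw [← hcoeff k hk, hR, ← hc, coeff_mul_C, cyclotomic_prime, finset_sum_coeff]
      rw [Finset.sum_eq_single k]
      · simp
      · intro j hj hjk; simp [coeff_X_pow, hjk, Ne.symm hjk]
      · intro h; exact absurd hk h
    have : ((∑ k ∈ range p, g k : ℤ) : ℚ) = p * c := by
      push_cast
      rw [Finset.sum_congr rfl hgc]
      simp [mul_comm]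
    rw [h2] at this
    have hc0 : c = 0 := by
      have hp0 : (p : ℚ) ≠ 0 := Nat.cast_ne_zero.mpr hp.out.ne_zero
      field_simp at this
      exact (mul_eq_zero.mp (by exact_mod_cast this.symm : (p : ℚ) * c = 0)).resolve_left hp0
    apply hQ0
    rw [hR, ← hc, hc0]
    simp
  intro k hk
  have := hcoeff k hk
  rw [hQ0, coeff_zero] at this
  exact_mod_cast this.symm

private lemma sum_zmod (p : ℕ) [hp : Fact p.Prime] {M : Type*} [AddCommMonoid M]
    (h : ZMod p → M) : ∑ a : ZMod p, h a = ∑ k ∈ range p, h (k : ZMod p) := by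
  haveI : NeZero p := ⟨hp.out.ne_zero⟩
  rw [Finset.sum_bij (fun (k : ℕ) (_ : k ∈ range p) => (k : ZMod p))]
  · intro k hk; exact mem_univ _
  · intro a ha b hb hab
    have := congrArg ZMod.val hab
    rwa [ZMod.val_cast_of_lt (mem_range.mp ha), ZMod.val_cast_of_lt (mem_range.mp hb)] at this
  · intro a _
    exact ⟨a.val, mem_range.mpr (ZMod.val_lt a), by simp [ZMod.natCast_val, ZMod.cast_id]⟩
  · intro k hk; rfl

private lemma zeta_natCast (p : ℕ) [hp : Fact p.Prime] (k : ℕ) :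
    zeta p (k : ZMod p) = Complex.exp (2 * Real.pi * Complex.I / p) ^ k := by
  haveI : NeZero p := ⟨hp.out.ne_zero⟩
  have hζ : IsPrimitiveRoot (Complex.exp (2 * Real.pi * Complex.I / p)) p :=
    Complex.isPrimitiveRoot_exp p hp.out.ne_zero
  show Complex.exp (2 * Real.pi * Complex.I / p) ^ (ZMod.val (k : ZMod p)) = _
  conv_rhs => rw [← Nat.div_add_mod k p]
  rw [pow_add, pow_mul, hζ.pow_eq_one, one_pow, one_mul, ZMod.val_natCast]

private lemma zeta_add (p : ℕ) [hp : Fact p.Prime] (a b : ZMod p) :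
    zeta p (a + b) = zeta p a * zeta p b := by
  haveI : NeZero p := ⟨hp.out.ne_zero⟩
  have h1 : ((a.val + b.val : ℕ) : ZMod p) = a + b := by
    push_cast; simp [ZMod.natCast_val, ZMod.cast_id]
  rw [← h1, zeta_natCast, pow_add]; rfl

private lemma zeta_zero (p : ℕ) : zeta p 0 = 1 := by simp [zeta]

private lemma sum_zeta_mul (p : ℕ) [hp : Fact p.Prime] (c : ZMod p) :
    ∑ z : ZMod p, zeta p (z * c) = if c = 0 then (p : ℂ) else 0 := by
  haveI : NeZero p := ⟨hp.out.ne_zero⟩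
  have hζ : IsPrimitiveRoot (Complex.exp (2 * Real.pi * Complex.I / p)) p :=
    Complex.isPrimitiveRoot_exp p hp.out.ne_zero
  by_cases hc : c = 0
  · simp [hc, zeta_zero, Finset.card_univ, ZMod.card]
  · rw [if_neg hc]
    have hbij : Function.Bijective (fun z : ZMod p => z * c) :=
      (Equiv.mulRight₀ c hc).bijective
    rw [Fintype.sum_bijective _ hbij _ (fun w => zeta p w) (fun z => rfl)]
    rw [sum_zmod]
    have := hζ.geom_sum_eq_zero hp.out.one_lt
    rw [← this]
    exact Finset.sum_congr rfl fun k hk => zeta_natCast p k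

private lemma keyZ (p : ℕ) [hp : Fact p.Prime] (g : ZMod p → ℤ)
    (h1 : ∑ a : ZMod p, (g a : ℂ) * zeta p a = 0)
    (h2 : ∑ a : ZMod p, g a = 0) : ∀ a : ZMod p, g a = 0 := by
  haveI : NeZero p := ⟨hp.out.ne_zero⟩
  rw [sum_zmod] at h1 h2
  have key := key_range p (fun k => g (k : ZMod p)) ?_ h2
  · intro a
    have := key a.val (mem_range.mpr (ZMod.val_lt a))
    simpa [ZMod.natCast_val, ZMod.cast_id] using this
  · rw [← h1]
    exact Finset.sum_congr rfl fun k hk => by rw [zeta_natCast]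

private lemma fiber_card (p : ℕ) [hp : Fact p.Prime]
    (F : Type*) [Field F] [Fintype F] [Algebra (ZMod p) F]
    (γ : F) (hγ : γ ≠ 0) (t : ZMod p) :
    (univ.filter fun x => Algebra.trace (ZMod p) F (γ * x) = t).card * p = Fintype.card F := by
  haveI : NeZero p := ⟨hp.out.ne_zero⟩
  haveI : Module.Finite (ZMod p) F := Module.Finite.of_finite
  set ψ : F → ZMod p := fun x => Algebra.trace (ZMod p) F (γ * x) with hψ
  have hsurj : Function.Surjective ψ := by
    intro c
    obtain ⟨y, hy⟩ := Algebra.trace_surjective (ZMod p) F c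
    refine ⟨γ⁻¹ * y, ?_⟩
    show Algebra.trace (ZMod p) F (γ * (γ⁻¹ * y)) = c
    rw [← mul_assoc, mul_inv_cancel₀ hγ, one_mul, hy]
  have hadd : ∀ x y : F, ψ (x + y) = ψ x + ψ y := by
    intro x y; simp [hψ, mul_add]
  have hcardeq : ∀ t' : ZMod p,
      (univ.filter fun x => ψ x = t').card = (univ.filter fun x => ψ x = t).card := by
    intro t'
    obtain ⟨x0, hx0⟩ := hsurj t'
    obtain ⟨x1, hx1⟩ := hsurj t
    have hd : ψ (x1 - x0) = t - t' := by
      have h := hadd (x1 - x0) x0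
      rw [sub_add_cancel, hx1, hx0] at h
      linear_combination -h
    refine Finset.card_bij' (fun x _ => x + (x1 - x0)) (fun x _ => x - (x1 - x0))
      ?_ ?_ ?_ ?_
    · intro x hx
      simp only [mem_filter, mem_univ, true_and] at hx ⊢
      rw [hadd, hx, hd]; ring
    · intro x hx
      simp only [mem_filter, mem_univ, true_and] at hx ⊢
      have h2 : ψ (x - (x1 - x0)) + ψ (x1 - x0) = ψ x := by
        rw [← hadd, sub_add_cancel]
      rw [hd, hx] at h2
      linear_combination h2
    · intro x _; ring
    · intro x _; ring
  have hpart : ∑ t' : ZMod p, (univ.filter fun x => ψ x = t').card = Fintype.card F := by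
    rw [← Finset.card_univ, Finset.card_eq_sum_card_fiberwise (f := ψ) (t := univ)]
    intro x _; exact mem_univ _
  have : ∑ t' : ZMod p, (univ.filter fun x => ψ x = t').card
      = (univ.filter fun x => ψ x = t).card * p := by
    rw [Finset.sum_congr rfl fun t' _ => hcardeq t', Finset.sum_const, Finset.card_univ,
      ZMod.card, smul_eq_mul, mul_comm]
  rw [← hpart, this]

end Aux

/-- Proposition 3.3. For a `p`-ary function `f` and nonzero
`β, β' ∈ 𝔽_q^*`: `χ_β(D_{f,i}) = χ_{β'}(D_{f,i})` for all `i ∈ 𝔽_p` if and only if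
`W_f(zβ) = W_f(zβ')` for all `z ∈ 𝔽_p^*`. -/
theorem stmt_2 (p m : ℕ) [Fact p.Prime] (hm : 0 < m)
    (F : Type*) [Field F] [Fintype F] [Algebra (ZMod p) F]
    (hcard : Fintype.card F = p ^ m)
    (f : F → ZMod p) (β β' : F) (hβ : β ≠ 0) (hβ' : β' ≠ 0) :
    (∀ i : ZMod p, chi p β (Dset f i) = chi p β' (Dset f i)) ↔
    (∀ z : (ZMod p)ˣ, walsh p f (algebraMap (ZMod p) F (z : ZMod p) * β)
        = walsh p f (algebraMap (ZMod p) F (z : ZMod p) * β')) := by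
  classical
  have hp : Fact p.Prime := inferInstance
  set N : F → ZMod p → ZMod p → ℕ := fun γ i t =>
    (univ.filter fun x => f x = i ∧ Algebra.trace (ZMod p) F (γ * x) = t).card with hNdef
  -- chi expansion
  have hchi : ∀ (γ : F) (i : ZMod p),
      chi p γ (Dset f i) = ∑ t : ZMod p, (N γ i t : ℂ) * zeta p t := by
    intro γ i
    unfold chi
    rw [← Finset.sum_fiberwise (Dset f i) (fun x => Algebra.trace (ZMod p) F (γ * x))
      (fun x => zeta p (Algebra.trace (ZMod p) F (γ * x)))]
    refine Finset.sum_congr rfl fun t _ => ?_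
    have h1 : ∀ x ∈ (Dset f i).filter (fun x => Algebra.trace (ZMod p) F (γ * x) = t),
        zeta p (Algebra.trace (ZMod p) F (γ * x)) = zeta p t :=
      fun x hx => by rw [(Finset.mem_filter.mp hx).2]
    rw [Finset.sum_congr rfl h1, Finset.sum_const, nsmul_eq_mul, hNdef]
    congr 2
    rw [Dset, Finset.filter_filter]
  -- walsh expansion
  have hwalsh : ∀ (γ : F) (z : ZMod p),
      walsh p f (algebraMap (ZMod p) F z * γ)
        = ∑ i : ZMod p, ∑ t : ZMod p, (N γ i t : ℂ) * zeta p (i - z * t) := by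
    intro γ z
    unfold walsh
    have h1 : ∀ x ∈ (univ : Finset F),
        zeta p (f x - Algebra.trace (ZMod p) F ((algebraMap (ZMod p) F z * γ) * x))
        = zeta p (f x - z * Algebra.trace (ZMod p) F (γ * x)) := by
      intro x _
      rw [mul_assoc, ← Algebra.smul_def, map_smul, smul_eq_mul]
    rw [Finset.sum_congr rfl h1]
    rw [← Finset.sum_fiberwise univ f
      (fun x => zeta p (f x - z * Algebra.trace (ZMod p) F (γ * x)))]
    refine Finset.sum_congr rfl fun i _ => ?_
    rw [← Finset.sum_fiberwise (univ.filter fun x => f x = i)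
      (fun x => Algebra.trace (ZMod p) F (γ * x))
      (fun x => zeta p (f x - z * Algebra.trace (ZMod p) F (γ * x)))]
    refine Finset.sum_congr rfl fun t _ => ?_
    have h2 : ∀ x ∈ ((univ : Finset F).filter fun x => f x = i).filter
        (fun x => Algebra.trace (ZMod p) F (γ * x) = t),
        zeta p (f x - z * Algebra.trace (ZMod p) F (γ * x)) = zeta p (i - z * t) := by
      intro x hx
      obtain ⟨hx1, hx2⟩ := Finset.mem_filter.mp hx
      rw [(Finset.mem_filter.mp hx1).2, hx2]
    rw [Finset.sum_congr rfl h2, Finset.sum_const, nsmul_eq_mul, hNdef]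
    congr 2
    rw [Finset.filter_filter]
  -- row sums
  have hrow : ∀ (γ : F) (i : ZMod p), ∑ t : ZMod p, (N γ i t : ℤ) = ((Dset f i).card : ℤ) := by
    intro γ i
    have h1 : (Dset f i).card = ∑ t : ZMod p, N γ i t := by
      rw [Finset.card_eq_sum_card_fiberwise
        (f := fun x => Algebra.trace (ZMod p) F (γ * x)) (t := univ) (fun x _ => mem_univ _)]
      refine Finset.sum_congr rfl fun t _ => ?_
      rw [hNdef]
      congr 1
      rw [Dset, Finset.filter_filter]
    rw [h1]
    push_cast
    rfl
  -- column sums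
  have hcol : ∀ (γ : F), γ ≠ 0 → ∀ c : ZMod p,
      (∑ i : ZMod p, (N γ i c : ℤ)) * p = (Fintype.card F : ℤ) := by
    intro γ hγ c
    have h1 : ∑ i : ZMod p, N γ i c
        = (univ.filter fun x => Algebra.trace (ZMod p) F (γ * x) = c).card := by
      rw [Finset.card_eq_sum_card_fiberwise (f := f) (t := univ) (fun x _ => mem_univ _)]
      refine Finset.sum_congr rfl fun i _ => ?_
      rw [Finset.filter_filter]
      simp only [hNdef]
      exact congrArg Finset.card (Finset.filter_congr fun x _ => by tauto)
    have h2 := fiber_card p F γ hγ c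
    rw [← h2, ← h1]
    push_cast
    ring
  -- Fourier inversion
  have hS : ∀ (γ : F) (c : ZMod p),
      ∑ z : ZMod p, zeta p (z * c) * walsh p f (algebraMap (ZMod p) F z * γ)
        = (p : ℂ) * ∑ i : ZMod p, (N γ i c : ℂ) * zeta p i := by
    intro γ c
    have step1 : ∀ z : ZMod p, zeta p (z * c) * walsh p f (algebraMap (ZMod p) F z * γ)
        = ∑ i : ZMod p, ∑ t : ZMod p, ((N γ i t : ℂ) * zeta p i) * zeta p (z * (c - t)) := by
      intro z
      rw [hwalsh γ z, Finset.mul_sum]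
      refine Finset.sum_congr rfl fun i _ => ?_
      rw [Finset.mul_sum]
      refine Finset.sum_congr rfl fun t _ => ?_
      rw [show zeta p (z * c) * ((N γ i t : ℂ) * zeta p (i - z * t))
          = (N γ i t : ℂ) * (zeta p (z * c) * zeta p (i - z * t)) from by ring,
        ← zeta_add, show z * c + (i - z * t) = i + z * (c - t) from by ring, zeta_add]
      ring
    rw [Finset.sum_congr rfl fun z _ => step1 z, Finset.sum_comm]
    rw [Finset.sum_congr rfl fun i (_ : i ∈ univ) => Finset.sum_comm]
    rw [Finset.mul_sum]
    refine Finset.sum_congr rfl fun i _ => ?_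
    have h3 : ∀ t : ZMod p, ∑ z : ZMod p, ((N γ i t : ℂ) * zeta p i) * zeta p (z * (c - t))
        = ((N γ i t : ℂ) * zeta p i) * (if c - t = 0 then (p : ℂ) else 0) := by
      intro t
      rw [← Finset.mul_sum, sum_zeta_mul]
    rw [Finset.sum_congr rfl fun t _ => h3 t]
    rw [Finset.sum_eq_single c]
    · rw [sub_self, if_pos rfl]
      ring
    · intro t _ htc
      rw [if_neg (fun h => htc (by linear_combination -h)), mul_zero]
    · intro h
      exact absurd (mem_univ c) h
  -- equivalences with N equality
  have hNeq_of_chi : (∀ i : ZMod p, chi p β (Dset f i) = chi p β' (Dset f i)) →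
      ∀ i t : ZMod p, N β i t = N β' i t := by
    intro h i t
    have key := keyZ p (fun t => (N β i t : ℤ) - (N β' i t : ℤ)) ?_ ?_
    · have := key t
      omega
    · push_cast
      simp only [sub_mul, Finset.sum_sub_distrib]
      rw [← hchi β i, ← hchi β' i, h i, sub_self]
    · rw [Finset.sum_sub_distrib, hrow β i, hrow β' i, sub_self]
  have hNeq_of_walsh : (∀ z : (ZMod p)ˣ, walsh p f (algebraMap (ZMod p) F (z : ZMod p) * β)
        = walsh p f (algebraMap (ZMod p) F (z : ZMod p) * β')) →
      ∀ i t : ZMod p, N β i t = N β' i t := by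
    intro h
    have hall : ∀ z : ZMod p, walsh p f (algebraMap (ZMod p) F z * β)
        = walsh p f (algebraMap (ZMod p) F z * β') := by
      intro z
      by_cases hz : z = 0
      · subst hz
        simp only [map_zero, zero_mul]
      · exact h (Units.mk0 z hz)
    have key : ∀ c i : ZMod p, ((N β i c : ℤ) - (N β' i c : ℤ)) = 0 := by
      intro c
      apply keyZ p (fun i => (N β i c : ℤ) - (N β' i c : ℤ))
      · have heqS : (p : ℂ) * ∑ i : ZMod p, (N β i c : ℂ) * zeta p i
            = (p : ℂ) * ∑ i : ZMod p, (N β' i c : ℂ) * zeta p i := by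
          rw [← hS β c, ← hS β' c]
          exact Finset.sum_congr rfl fun z _ => by rw [hall z]
        have hp0 : (p : ℂ) ≠ 0 := Nat.cast_ne_zero.mpr hp.out.ne_zero
        have heq := mul_left_cancel₀ hp0 heqS
        push_cast
        simp only [sub_mul, Finset.sum_sub_distrib]
        rw [heq, sub_self]
      · have h1 := hcol β hβ c
        have h2 := hcol β' hβ' c
        have hpz : (p : ℤ) ≠ 0 := Int.natCast_ne_zero.mpr hp.out.ne_zero
        have h3 := mul_right_cancel₀ hpz (h1.trans h2.symm)
        rw [Finset.sum_sub_distrib, h3, sub_self]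
    intro i t
    have := key t i
    omega
  constructor
  · intro h z
    have hN := hNeq_of_chi h
    rw [hwalsh β z, hwalsh β' z]
    exact Finset.sum_congr rfl fun i _ => Finset.sum_congr rfl fun t _ => by rw [hN i t]
  · intro h i
    have hN := hNeq_of_walsh h
    rw [hchi β i, hchi β' i]
    exact Finset.sum_congr rfl fun t _ => by rw [hN i t]
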